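/- Let Ω = [α, β] ⊂ ℝ, let ρ̄ : ℝ × ℝ → ℝ be continuously differentiable, let N ≥ 3, K_φ > 0, and let p_1,…,p_N : ℝ → ℝ and φ_1,…,φ_N : ℝ → ℝ be differentiable with α < p_1(t) < ⋯ < p_N(t) < β for all t. Define boundaries r_0(t) := α, r_N(t) := β, r_j(t) := (p_j(t) + p_{j+1}(t))/2 + (φ_j(t) − φ_{j+1}(t))/(p_{j+1}(t) − p_j(t)) for 1 ≤ j ≤ N−1, and assume r_{j−1}(t) < r_j(t) for all j, t. Define masses a_j(t) := ∫_{r_{j−1}(t)}^{r_j(t)} ρ̄(x, t) dx, assumed positive, and barycenters b_j(t) := (1/a_j(t)) ∫_{r_{j−1}(t)}^{r_j(t)} x ρ̄(x, t) dx. Assume the dual dynamics φ_j'(t) = K_φ·(1/N − a_j(t)) for all j. For an interior index i (2 ≤ i ≤ N−1), define δ_i^r := (r_i − b_i)·ρ̄(r_i, t)/a_i, δ_i^l := (r_{i−1} − b_i)·ρ̄(r_{i−1}, t)/a_i, c_{j,j} := 1/2 + (φ_j − φ_{j+1})/(p_{j+1} − p_j)², c_{j,j+1} := 1/2 − (φ_j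 − φ_{j+1})/(p_{j+1} − p_j)², q̃_j := K_φ·(a_{j+1} − a_j)/(p_{j+1} − p_j), q_i := (1/a_i)∫_{r_{i−1}}^{r_i} (x − b_i)·∂_t ρ̄(x, t) dx + δ_i^r·q̃_i − δ_i^l·q̃_{i−1}, m_{i,i−1} := −δ_i^l·c_{i−1,i−1}, m_{i,i} := δ_i^r·c_{i,i} − δ_i^l·c_{i−1,i}, and m_{i,i+1} := δ_i^r·c_{i,i+1}. Then b_i is differentiable and b_i'(t) = q_i(t) + m_{i,i−1}(t)·p_{i−1}'(t) + m_{i,i}(t)·p_i'(t) + m_{i,i+1}(t)·p_{i+1}'(t). -/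

import Mathlib

open intervalIntegral

/-- Time-varying Laguerre cell boundaries in one dimension on `Ω = [α, β]`:
`r 0 = α`, `r N = β`, and interior boundaries determined by positions `p`
and dual weights `φ`. -/
noncomputable def tvBdry (α β : ℝ) (N : ℕ) (p φ : ℕ → ℝ → ℝ) (j : ℕ) (t : ℝ) : ℝ :=
  if j = 0 then α
  else if j = N then β
  else (p j t + p (j + 1) t) / 2 + (φ j t - φ (j + 1) t) / (p (j + 1) t - p j t)

/-- Mass of the `j`-th time-varying Laguerre cell. -/
noncomputable def tvMass (α β : ℝ) (ρ : ℝ × ℝ → ℝ) (N : ℕ) (p φ : ℕ → ℝ → ℝ)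
    (j : ℕ) (t : ℝ) : ℝ :=
  ∫ x in tvBdry α β N p φ (j - 1) t..tvBdry α β N p φ j t, ρ (x, t)

/-- Barycenter of the `j`-th time-varying Laguerre cell. -/
noncomputable def tvBary (α β : ℝ) (ρ : ℝ × ℝ → ℝ) (N : ℕ) (p φ : ℕ → ℝ → ℝ)
    (j : ℕ) (t : ℝ) : ℝ :=
  (tvMass α β ρ N p φ j t)⁻¹
    * ∫ x in tvBdry α β N p φ (j - 1) t..tvBdry α β N p φ j t, x * ρ (x, t)

/-- `δ_j^r = (r_j - b_j) ρ̄(r_j, t) / a_j`. -/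
noncomputable def tvDeltaR (α β : ℝ) (ρ : ℝ × ℝ → ℝ) (N : ℕ) (p φ : ℕ → ℝ → ℝ)
    (j : ℕ) (t : ℝ) : ℝ :=
  (tvBdry α β N p φ j t - tvBary α β ρ N p φ j t) * ρ (tvBdry α β N p φ j t, t)
    / tvMass α β ρ N p φ j t

/-- `δ_j^l = (r_{j-1} - b_j) ρ̄(r_{j-1}, t) / a_j`. -/
noncomputable def tvDeltaL (α β : ℝ) (ρ : ℝ × ℝ → ℝ) (N : ℕ) (p φ : ℕ → ℝ → ℝ)
    (j : ℕ) (t : ℝ) : ℝ :=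
  (tvBdry α β N p φ (j - 1) t - tvBary α β ρ N p φ j t)
    * ρ (tvBdry α β N p φ (j - 1) t, t) / tvMass α β ρ N p φ j t

/-- `c_{j,j} = 1/2 + (φ_j - φ_{j+1}) / (p_{j+1} - p_j)²`. -/
noncomputable def tvCSame (p φ : ℕ → ℝ → ℝ) (j : ℕ) (t : ℝ) : ℝ :=
  1 / 2 + (φ j t - φ (j + 1) t) / (p (j + 1) t - p j t) ^ 2

/-- `c_{j,j+1} = 1/2 - (φ_j - φ_{j+1}) / (p_{j+1} - p_j)²`. -/
noncomputable def tvCNext (p φ : ℕ → ℝ → ℝ) (j : ℕ) (t : ℝ) : ℝ :=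
  1 / 2 - (φ j t - φ (j + 1) t) / (p (j + 1) t - p j t) ^ 2

/-- `q̃_j = K_φ (a_{j+1} - a_j) / (p_{j+1} - p_j)`. -/
noncomputable def tvQTilde (α β : ℝ) (ρ : ℝ × ℝ → ℝ) (N : ℕ) (p φ : ℕ → ℝ → ℝ)
    (Kφ : ℝ) (j : ℕ) (t : ℝ) : ℝ :=
  Kφ * (tvMass α β ρ N p φ (j + 1) t - tvMass α β ρ N p φ j t)
    / (p (j + 1) t - p j t)

/-- Inhomogeneous term
`q_i = (1/a_i) ∫ (x - b_i) ∂_t ρ̄(x,t) dx + δ_i^r q̃_i - δ_i^l q̃_{i-1}`. -/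
noncomputable def tvQ (α β : ℝ) (ρ : ℝ × ℝ → ℝ) (N : ℕ) (p φ : ℕ → ℝ → ℝ)
    (Kφ : ℝ) (i : ℕ) (t : ℝ) : ℝ :=
  (tvMass α β ρ N p φ i t)⁻¹
      * (∫ x in tvBdry α β N p φ (i - 1) t..tvBdry α β N p φ i t,
          (x - tvBary α β ρ N p φ i t) * deriv (fun s => ρ (x, s)) t)
    + tvDeltaR α β ρ N p φ i t * tvQTilde α β ρ N p φ Kφ i t
    - tvDeltaL α β ρ N p φ i t * tvQTilde α β ρ N p φ Kφ (i - 1) t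

open MeasureTheory Asymptotics Filter Topology


lemma hasDerivAt_partial_t {f : ℝ × ℝ → ℝ} (hf : ContDiff ℝ 1 f) (x t : ℝ) :
    HasDerivAt (fun s => f (x, s)) (fderiv ℝ f (x, t) (0, 1)) t := by
  have h1 : HasFDerivAt f (fderiv ℝ f (x,t)) (x,t) :=
    (hf.differentiable one_ne_zero (x,t)).hasFDerivAt
  have h2 : HasDerivAt (fun s : ℝ => ((x, s) : ℝ × ℝ)) ((0 : ℝ), (1 : ℝ)) t :=
    (hasDerivAt_const t x).prodMk (hasDerivAt_id t)
  exact h1.comp_hasDerivAt t h2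

lemma cont_partial_t {f : ℝ × ℝ → ℝ} (hf : ContDiff ℝ 1 f) :
    Continuous fun z : ℝ × ℝ => fderiv ℝ f z (0, 1) :=
  (hf.continuous_fderiv one_ne_zero).clm_apply continuous_const

lemma hasDerivAt_param (f : ℝ × ℝ → ℝ) (hf : ContDiff ℝ 1 f) (a b t₀ : ℝ) :
    HasDerivAt (fun t => ∫ x in a..b, f (x, t))
      (∫ x in a..b, fderiv ℝ f (x, t₀) (0, 1)) t₀ := by
  have hc : Continuous f := hf.continuous
  have hcp := cont_partial_t hf
  obtain ⟨C, hC⟩ : ∃ C, ∀ z ∈ Set.uIcc a b ×ˢ Set.Icc (t₀ - 1) (t₀ + 1),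
      ‖fderiv ℝ f z (0, 1)‖ ≤ C := by
    obtain ⟨C, hC⟩ := (isCompact_uIcc.prod isCompact_Icc).exists_bound_of_continuousOn
      hcp.continuousOn
    exact ⟨C, hC⟩
  have := intervalIntegral.hasDerivAt_integral_of_dominated_loc_of_deriv_le
    (F := fun t x => f (x, t)) (F' := fun t x => fderiv ℝ f (x, t) (0, 1))
    (x₀ := t₀) (s := Metric.ball t₀ 1) (a := a) (b := b) (μ := volume) (bound := fun _ => C)
    (Metric.ball_mem_nhds t₀ one_pos)
    (Filter.Eventually.of_forall fun t =>
      (hc.comp (continuous_id.prodMk continuous_const)).aestronglyMeasurable)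
    ((hc.comp (continuous_id.prodMk continuous_const)).intervalIntegrable _ _)
    (hcp.comp (continuous_id.prodMk continuous_const)).aestronglyMeasurable
    (Filter.Eventually.of_forall fun x hx t ht => by
      apply hC
      refine Set.mk_mem_prod (Set.Ioc_subset_Icc_self hx) ?_
      have := Metric.mem_ball.1 ht
      rw [Real.dist_eq, abs_lt] at this
      exact ⟨by linarith [this.1], by linarith [this.2]⟩)
    (intervalIntegrable_const)
    (Filter.Eventually.of_forall fun x _ t _ => hasDerivAt_partial_t hf x t)
  exact this.2

lemma hasDerivAt_boundary {f : ℝ × ℝ → ℝ} (hf : ContDiff ℝ 1 f)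
    {v : ℝ → ℝ} {v' t₀ : ℝ} (hv : HasDerivAt v v' t₀) :
    HasDerivAt (fun t => ∫ x in v t₀..v t, f (x, t)) (f (v t₀, t₀) * v') t₀ := by
  have hc : Continuous f := hf.continuous
  have hg : HasDerivAt (fun t => ∫ x in v t₀..v t, f (x, t₀)) (f (v t₀, t₀) * v') t₀ := by
    have hF : HasDerivAt (fun y => ∫ x in v t₀..y, f (x, t₀)) (f (v t₀, t₀)) (v t₀) := by
      apply intervalIntegral.integral_hasDerivAt_right
      · exact (hc.comp (continuous_id.prodMk continuous_const)).intervalIntegrable _ _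
      · exact (hc.comp (continuous_id.prodMk continuous_const)).stronglyMeasurable.stronglyMeasurableAtFilter
      · exact (hc.comp (continuous_id.prodMk continuous_const)).continuousAt
    exact hF.comp t₀ hv
  have hE : HasDerivAt (fun t => ∫ x in v t₀..v t, (f (x, t) - f (x, t₀))) 0 t₀ := by
    rw [hasDerivAt_iff_isLittleO]
    simp only [intervalIntegral.integral_same, sub_zero, smul_zero, sub_zero]
    obtain ⟨K, s, hs, hK⟩ := hf.locallyLipschitz (v t₀, t₀)
    obtain ⟨ε, hε, hball⟩ := Metric.mem_nhds_iff.1 hs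
    have hvc : ContinuousAt v t₀ := hv.continuousAt
    have hev : ∀ᶠ t in 𝓝 t₀, |v t - v t₀| < ε / 2 ∧ |t - t₀| < ε / 2 := by
      filter_upwards [hvc.tendsto (Metric.ball_mem_nhds (v t₀) (show (0:ℝ) < ε/2 by positivity)),
        Metric.ball_mem_nhds t₀ (show (0:ℝ) < ε/2 by positivity)] with t h1 h2
      exact ⟨by simpa [Real.dist_eq] using h1, by simpa [Real.dist_eq] using h2⟩
    have hbound : (fun t => ∫ x in v t₀..v t, (f (x, t) - f (x, t₀)))
        =O[𝓝 t₀] fun t => (t - t₀) * (v t - v t₀) := by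
      apply Asymptotics.IsBigO.of_bound K
      filter_upwards [hev] with t ⟨h1, h2⟩
      have key : ∀ x ∈ Set.uIoc (v t₀) (v t), ‖f (x, t) - f (x, t₀)‖ ≤ K * |t - t₀| := by
        intro x hx
        have hx' : x ∈ Set.uIcc (v t₀) (v t) := Set.Ioc_subset_Icc_self hx
        have hx1 : |x - v t₀| < ε / 2 := by
          rw [Set.uIcc_eq_union] at hx'
          rcases hx' with hx' | hx' <;> rcases abs_cases (v t - v t₀) with ⟨ha, _⟩ | ⟨ha, _⟩ <;>
            simp only [Set.mem_Icc] at hx' <;> rw [abs_lt] <;> constructor <;>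
              nlinarith [abs_lt.1 h1]
        have hmem : ∀ u : ℝ, |u - t₀| < ε/2 → ((x, u) : ℝ × ℝ) ∈ s := by
          intro u hu
          apply hball
          rw [Metric.mem_ball, Prod.dist_eq]
          simp only [Real.dist_eq]
          exact max_lt (by linarith) (by linarith)
        have hd := hK.dist_le_mul (x, t) (hmem t (by linarith)) (x, t₀)
          (hmem t₀ (by simp; positivity))
        rw [Prod.dist_eq] at hd
        simp only [Real.dist_eq, sub_self, abs_zero] at hd
        calc ‖f (x, t) - f (x, t₀)‖ = dist (f (x, t)) (f (x, t₀)) := by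
              rw [Real.dist_eq]; rfl
          _ ≤ K * max 0 |t - t₀| := hd
          _ = K * |t - t₀| := by rw [max_eq_right (abs_nonneg _)]
      calc ‖∫ x in v t₀..v t, (f (x, t) - f (x, t₀))‖
          ≤ K * |t - t₀| * |v t - v t₀| :=
            intervalIntegral.norm_integral_le_of_norm_le_const key
        _ ≤ K * ‖(t - t₀) * (v t - v t₀)‖ := by
            rw [Real.norm_eq_abs, abs_mul, mul_assoc]
    have hsq : (fun t => (t - t₀) * (v t - v t₀)) =o[𝓝 t₀] fun t => t - t₀ := by
      have h1 : (fun t : ℝ => t - t₀) =o[𝓝 t₀] (fun _ => (1:ℝ)) := by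
        rw [Asymptotics.isLittleO_one_iff]
        have : Filter.Tendsto (fun t : ℝ => t - t₀) (𝓝 t₀) (𝓝 (t₀ - t₀)) :=
          tendsto_id.sub tendsto_const_nhds
        simpa using this
      simpa using h1.mul_isBigO (hv.isBigO_sub)
    exact hbound.trans_isLittleO hsq
  have heq : (fun t => ∫ x in v t₀..v t, f (x, t))
      = fun t => (∫ x in v t₀..v t, f (x, t₀)) + ∫ x in v t₀..v t, (f (x, t) - f (x, t₀)) := by
    funext t
    rw [← intervalIntegral.integral_add]
    · simp
    · exact (hc.comp (continuous_id.prodMk continuous_const)).intervalIntegrable _ _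
    · exact ((hc.comp (continuous_id.prodMk continuous_const)).sub
        (hc.comp (continuous_id.prodMk continuous_const))).intervalIntegrable _ _
  rw [heq]
  have := hg.add hE; rw [add_zero] at this; exact this

lemma hasDerivAt_moving {f : ℝ × ℝ → ℝ} (hf : ContDiff ℝ 1 f)
    {u v : ℝ → ℝ} {u' v' t₀ : ℝ} (hu : HasDerivAt u u' t₀) (hv : HasDerivAt v v' t₀) :
    HasDerivAt (fun t => ∫ x in u t..v t, f (x, t))
      (f (v t₀, t₀) * v' - f (u t₀, t₀) * u'
        + ∫ x in u t₀..v t₀, fderiv ℝ f (x, t₀) (0, 1)) t₀ := by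
  have hc : Continuous f := hf.continuous
  have hint : ∀ (c d t : ℝ), IntervalIntegrable (fun x => f (x, t)) volume c d :=
    fun c d t => (hc.comp (continuous_id.prodMk continuous_const)).intervalIntegrable _ _
  have heq : (fun t => ∫ x in u t..v t, f (x, t)) = fun t =>
      (∫ x in u t₀..v t₀, f (x, t)) + (∫ x in v t₀..v t, f (x, t))
        - (∫ x in u t₀..u t, f (x, t)) := by
    funext t
    rw [← intervalIntegral.integral_add_adjacent_intervals (hint (u t) (u t₀) t)
      (hint (u t₀) (v t) t),
      ← intervalIntegral.integral_add_adjacent_intervals (hint (u t₀) (v t₀) t)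
        (hint (v t₀) (v t) t),
      intervalIntegral.integral_symm (u t₀) (u t)]
    ring
  rw [heq]
  have h1 := hasDerivAt_param f hf (u t₀) (v t₀) t₀
  have h2 := hasDerivAt_boundary hf hv
  have h3 := hasDerivAt_boundary hf hu
  refine ((h1.add h2).sub h3).congr_deriv ?_
  ring

/-- Theorem 2 of the paper (core computation): in one dimension, under the
dual dynamics `φ_j' = K_φ (1/N - a_j)`, the derivative of each interior
Laguerre barycenter decomposes as
`ḃ_i = q_i + m_{i,i-1} ṗ_{i-1} + m_{i,i} ṗ_i + m_{i,i+1} ṗ_{i+1}`, with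
`m_{i,i-1} = -δ_i^l c_{i-1,i-1}`, `m_{i,i} = δ_i^r c_{i,i} - δ_i^l c_{i-1,i}`,
`m_{i,i+1} = δ_i^r c_{i,i+1}`. -/
theorem barycenter_derivative_decomposition_1D
    (α β : ℝ) (ρ : ℝ × ℝ → ℝ) (hρ : ContDiff ℝ 1 ρ)
    (N : ℕ) (hN : 3 ≤ N) (Kφ : ℝ) (hKφ : 0 < Kφ)
    (p φ : ℕ → ℝ → ℝ)
    (hpdiff : ∀ j ∈ Finset.Icc 1 N, Differentiable ℝ (p j))
    (hφdiff : ∀ j ∈ Finset.Icc 1 N, Differentiable ℝ (φ j))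
    (hαp : ∀ t : ℝ, α < p 1 t)
    (hord : ∀ j ∈ Finset.Icc 1 (N - 1), ∀ t : ℝ, p j t < p (j + 1) t)
    (hpβ : ∀ t : ℝ, p N t < β)
    (hbdry : ∀ j ∈ Finset.Icc 1 N, ∀ t : ℝ,
      tvBdry α β N p φ (j - 1) t < tvBdry α β N p φ j t)
    (hmass : ∀ j ∈ Finset.Icc 1 N, ∀ t : ℝ, 0 < tvMass α β ρ N p φ j t)
    (hdual : ∀ j ∈ Finset.Icc 1 N, ∀ t : ℝ,
      deriv (φ j) t = Kφ * (1 / (N : ℝ) - tvMass α β ρ N p φ j t))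
    (i : ℕ) (hi2 : 2 ≤ i) (hiN : i ≤ N - 1) :
    Differentiable ℝ (tvBary α β ρ N p φ i) ∧
    (∀ t : ℝ,
      deriv (tvBary α β ρ N p φ i) t
        = tvQ α β ρ N p φ Kφ i t
          + (-(tvDeltaL α β ρ N p φ i t * tvCSame p φ (i - 1) t))
              * deriv (p (i - 1)) t
          + (tvDeltaR α β ρ N p φ i t * tvCSame p φ i t
              - tvDeltaL α β ρ N p φ i t * tvCNext p φ (i - 1) t)
              * deriv (p i) t
          + (tvDeltaR α β ρ N p φ i t * tvCNext p φ i t)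
              * deriv (p (i + 1)) t) := by
  have main : ∀ t₀ : ℝ, HasDerivAt (tvBary α β ρ N p φ i)
      (tvQ α β ρ N p φ Kφ i t₀
        + (-(tvDeltaL α β ρ N p φ i t₀ * tvCSame p φ (i - 1) t₀)) * deriv (p (i - 1)) t₀
        + (tvDeltaR α β ρ N p φ i t₀ * tvCSame p φ i t₀
            - tvDeltaL α β ρ N p φ i t₀ * tvCNext p φ (i - 1) t₀) * deriv (p i) t₀
        + (tvDeltaR α β ρ N p φ i t₀ * tvCNext p φ i t₀) * deriv (p (i + 1)) t₀) t₀ := by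
    intro t₀
    obtain ⟨k, rfl⟩ : ∃ k, i = k + 2 := ⟨i - 2, by omega⟩
    have hk1 : k + 2 - 1 = k + 1 := rfl
    -- boundary derivatives
    have hbd : ∀ j, 1 ≤ j → j ≤ N - 1 →
        HasDerivAt (fun t => tvBdry α β N p φ j t)
          (tvCSame p φ j t₀ * deriv (p j) t₀ + tvCNext p φ j t₀ * deriv (p (j+1)) t₀
            + tvQTilde α β ρ N p φ Kφ j t₀) t₀ := by
      intro j h1 h2
      have hj0 : j ≠ 0 := by omega
      have hjN : j ≠ N := by omega
      have hjm : j ∈ Finset.Icc 1 N := Finset.mem_Icc.2 ⟨h1, by omega⟩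
      have hj1m : j + 1 ∈ Finset.Icc 1 N := Finset.mem_Icc.2 ⟨by omega, by omega⟩
      have hp1 : HasDerivAt (p j) (deriv (p j) t₀) t₀ := (hpdiff j hjm t₀).hasDerivAt
      have hp2 : HasDerivAt (p (j+1)) (deriv (p (j+1)) t₀) t₀ := (hpdiff (j+1) hj1m t₀).hasDerivAt
      have hf1 : HasDerivAt (φ j) (deriv (φ j) t₀) t₀ := (hφdiff j hjm t₀).hasDerivAt
      have hf2 : HasDerivAt (φ (j+1)) (deriv (φ (j+1)) t₀) t₀ := (hφdiff (j+1) hj1m t₀).hasDerivAt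
      have hne : p (j+1) t₀ - p j t₀ ≠ 0 :=
        sub_ne_zero.2 (ne_of_gt (hord j (Finset.mem_Icc.2 ⟨h1, h2⟩) t₀))
      have heq : (fun t => tvBdry α β N p φ j t)
          = fun t => (p j t + p (j+1) t) / 2 + (φ j t - φ (j+1) t) / (p (j+1) t - p j t) := by
        funext t; simp [tvBdry, hj0, hjN]
      rw [heq]
      have hD := ((hp1.add hp2).div_const 2).add ((hf1.sub hf2).div (hp2.sub hp1) hne)
      refine hD.congr_deriv ?_
      rw [hdual j hjm t₀, hdual (j+1) hj1m t₀]
      simp only [tvCSame, tvCNext, tvQTilde, Pi.sub_apply, Pi.add_apply]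
      field_simp
      ring
    have hrL := hbd (k+1) (by omega) (by omega)
    have hrR := hbd (k+2) (by omega) (by omega)
    -- mass derivative
    have hmassD : HasDerivAt (tvMass α β ρ N p φ (k+2))
        (ρ (tvBdry α β N p φ (k+2) t₀, t₀)
            * (tvCSame p φ (k+2) t₀ * deriv (p (k+2)) t₀
              + tvCNext p φ (k+2) t₀ * deriv (p (k+3)) t₀
              + tvQTilde α β ρ N p φ Kφ (k+2) t₀)
          - ρ (tvBdry α β N p φ (k+1) t₀, t₀)
            * (tvCSame p φ (k+1) t₀ * deriv (p (k+1)) t₀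
              + tvCNext p φ (k+1) t₀ * deriv (p (k+2)) t₀
              + tvQTilde α β ρ N p φ Kφ (k+1) t₀)
          + ∫ x in tvBdry α β N p φ (k+1) t₀..tvBdry α β N p φ (k+2) t₀,
              fderiv ℝ ρ (x, t₀) (0, 1)) t₀ :=
      hasDerivAt_moving hρ hrL hrR
    -- numerator derivative
    have hf₂ : ContDiff ℝ 1 (fun z : ℝ × ℝ => z.1 * ρ z) := contDiff_fst.mul hρ
    have hfd : ∀ x : ℝ, fderiv ℝ (fun z : ℝ × ℝ => z.1 * ρ z) (x, t₀) ((0 : ℝ), (1 : ℝ))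
        = x * fderiv ℝ ρ (x, t₀) (0, 1) := by
      intro x
      exact (hasDerivAt_partial_t hf₂ x t₀).unique
        ((hasDerivAt_partial_t hρ x t₀).const_mul x)
    have hnumD : HasDerivAt
        (fun t => ∫ x in tvBdry α β N p φ (k+1) t..tvBdry α β N p φ (k+2) t, x * ρ (x, t))
        (tvBdry α β N p φ (k+2) t₀ * ρ (tvBdry α β N p φ (k+2) t₀, t₀)
            * (tvCSame p φ (k+2) t₀ * deriv (p (k+2)) t₀
              + tvCNext p φ (k+2) t₀ * deriv (p (k+3)) t₀
              + tvQTilde α β ρ N p φ Kφ (k+2) t₀)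
          - tvBdry α β N p φ (k+1) t₀ * ρ (tvBdry α β N p φ (k+1) t₀, t₀)
            * (tvCSame p φ (k+1) t₀ * deriv (p (k+1)) t₀
              + tvCNext p φ (k+1) t₀ * deriv (p (k+2)) t₀
              + tvQTilde α β ρ N p φ Kφ (k+1) t₀)
          + ∫ x in tvBdry α β N p φ (k+1) t₀..tvBdry α β N p φ (k+2) t₀,
              x * fderiv ℝ ρ (x, t₀) (0, 1)) t₀ := by
      have := hasDerivAt_moving hf₂ hrL hrR
      simp only [hfd] at this
      convert this using 1
    have hA : tvMass α β ρ N p φ (k+2) t₀ ≠ 0 :=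
      ne_of_gt (hmass (k+2) (Finset.mem_Icc.2 ⟨by omega, by omega⟩) t₀)
    have hbary := (hmassD.inv hA).mul hnumD
    have hbfun : tvBary α β ρ N p φ (k+2) = fun t => (tvMass α β ρ N p φ (k+2) t)⁻¹
        * ∫ x in tvBdry α β N p φ (k+1) t..tvBdry α β N p φ (k+2) t, x * ρ (x, t) := rfl
    replace hbary : HasDerivAt (tvBary α β ρ N p φ (k+2)) _ t₀ := hbary
    convert hbary using 1
    -- value identity
    have hderiv_eq : ∀ x : ℝ, deriv (fun s => ρ (x, s)) t₀ = fderiv ℝ ρ (x, t₀) (0, 1) :=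
      fun x => (hasDerivAt_partial_t hρ x t₀).deriv
    have hIc : IntervalIntegrable (fun x => x * fderiv ℝ ρ (x, t₀) (0, 1)) volume
        (tvBdry α β N p φ (k+1) t₀) (tvBdry α β N p φ (k+2) t₀) :=
      (continuous_id.mul ((cont_partial_t hρ).comp
        (continuous_id.prodMk continuous_const))).intervalIntegrable _ _
    have hIc2 : IntervalIntegrable (fun x => tvBary α β ρ N p φ (k+2) t₀
        * fderiv ℝ ρ (x, t₀) (0, 1)) volume
        (tvBdry α β N p φ (k+1) t₀) (tvBdry α β N p φ (k+2) t₀) :=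
      (continuous_const.mul ((cont_partial_t hρ).comp
        (continuous_id.prodMk continuous_const))).intervalIntegrable _ _
    have hsplit : (∫ x in tvBdry α β N p φ (k+1) t₀..tvBdry α β N p φ (k+2) t₀,
          (x - tvBary α β ρ N p φ (k+2) t₀) * fderiv ℝ ρ (x, t₀) (0, 1))
        = (∫ x in tvBdry α β N p φ (k+1) t₀..tvBdry α β N p φ (k+2) t₀,
            x * fderiv ℝ ρ (x, t₀) (0, 1))
          - tvBary α β ρ N p φ (k+2) t₀
            * ∫ x in tvBdry α β N p φ (k+1) t₀..tvBdry α β N p φ (k+2) t₀,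
                fderiv ℝ ρ (x, t₀) (0, 1) := by
      simp only [sub_mul]
      rw [intervalIntegral.integral_sub hIc hIc2, intervalIntegral.integral_const_mul]
    simp only [tvQ, hk1, hderiv_eq, hsplit]
    simp only [tvDeltaR, tvDeltaL, hk1, Pi.inv_apply]
    have hBdef : tvBary α β ρ N p φ (k+2) t₀ = (tvMass α β ρ N p φ (k+2) t₀)⁻¹
        * ∫ x in tvBdry α β N p φ (k+1) t₀..tvBdry α β N p φ (k+2) t₀, x * ρ (x, t₀) := rfl
    rw [hBdef]
    field_simp
    ring
  exact ⟨fun t => (main t).differentiableAt, fun t => (main t).deriv⟩
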